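/- Under the input kernel conditions, the function σ ↦ F_{ρ,μ}(x,σ) (defined as F(x,σ) = −∫ w(σ‖x−x'‖^θ) K/(∫K dμ) dμ(x') − log(∫ K dμ(x')) + log ρ with K = exp(−w(σ‖x−x'‖^θ))) is strictly increasing in σ for every fixed x. -/

import Mathlib

open MeasureTheory Filter

/-- `F(x,σ) = -∫ w(σ‖x-x'‖^θ) K/(∫K dμ) dμ(x') - log(∫ K dμ) + log ρ`
with `K = exp(-w(σ‖x-x'‖^θ))`. -/
noncomputable def entropyF {d : ℕ} (w : ℝ → ℝ) (θ ρ : ℝ)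
    (μ : Measure (EuclideanSpace ℝ (Fin d)))
    (x : EuclideanSpace ℝ (Fin d)) (σ : ℝ) : ℝ :=
  (-(∫ x', w (σ * ‖x - x'‖ ^ θ) * Real.exp (-(w (σ * ‖x - x'‖ ^ θ))) /
        (∫ x'', Real.exp (-(w (σ * ‖x - x''‖ ^ θ))) ∂μ) ∂μ))
    - Real.log (∫ x', Real.exp (-(w (σ * ‖x - x'‖ ^ θ))) ∂μ) + Real.log ρ

/-!
Write `E_σ = w (σ ‖x - ·‖ ^ θ)` and `S(E) = ⟨E⟩_E + log Z(E)` for the entropy of the Gibbs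
density `exp (-E) / Z(E)` relative to `μ`, so that `F(x, σ) = log ρ - S(E_σ)`. For `σ₁ < σ₂`,
`S(E₂) = ⟨E₁⟩₂ + ⟨E₂ - E₁⟩₂ + log Z₂`. Gibbs' inequality (strict Jensen for `exp`) gives
`⟨E₂ - E₁⟩₂ < log (Z₁ / Z₂)`, strictly because `E₂ - E₁` vanishes at `x` but not away from it.
Chebyshev's correlation inequality gives `⟨E₁⟩₂ ≤ ⟨E₁⟩₁`: the density ratio `exp (-(E₂ - E₁))`
decreases where `E₁` increases, since both `E₁` and `E₂ - E₁ = w(σ₂ t) - w(σ₁ t)`, `t = ‖x - ·‖ ^ θ`,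
are nondecreasing in `t`; the latter because `(t w'(t))' = w' + t w'' ≥ 0` makes `t ↦ t w'(t)`
nondecreasing. Hence `S(E₂) < S(E₁)`.
-/

open Real Set
open scoped ENNReal

theorem monotoneOn_id_mul_of_hasDerivAt {f f' : ℝ → ℝ} (hf : ∀ t ≥ 0, HasDerivAt f (f' t) t)
    (hnonneg : ∀ t ≥ 0, 0 ≤ f t + t * f' t) : MonotoneOn (fun t => t * f t) (Ici 0) := by
  have hderiv : ∀ t ≥ 0, HasDerivAt (fun t => t * f t) (f t + t * f' t) t := fun t ht => by
    simpa using (hasDerivAt_id' t).fun_mul (hf t ht)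
  refine monotoneOn_of_hasDerivWithinAt_nonneg (f' := fun t => f t + t * f' t) (convex_Ici 0)
    (fun t ht => (hderiv t ht).continuousAt.continuousWithinAt) (fun t ht => ?_) (fun t ht => ?_)
  all_goals rw [interior_Ici] at ht
  · exact (hderiv t ht.le).hasDerivWithinAt
  · exact hnonneg t ht.le

theorem monotoneOn_comp_mul_sub_comp_mul {w w' : ℝ → ℝ} (hder : ∀ t ≥ 0, HasDerivAt w (w' t) t)
    (hmono : MonotoneOn (fun t => t * w' t) (Ici 0)) {a b : ℝ} (ha : 0 ≤ a) (hab : a ≤ b) :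
    MonotoneOn (fun t => w (b * t) - w (a * t)) (Ici 0) := by
  have hcomp : ∀ c ≥ 0, ∀ t ≥ 0, HasDerivAt (fun t => w (c * t)) (w' (c * t) * c) t :=
    fun c hc t ht =>
      ((hder (c * t) (by positivity)).comp t ((hasDerivAt_id' t).const_mul c)).congr_deriv
        (by ring)
  have hderiv : ∀ t ≥ 0,
      HasDerivAt (fun t => w (b * t) - w (a * t)) (w' (b * t) * b - w' (a * t) * a) t :=
    fun t ht => (hcomp b (ha.trans hab) t ht).sub (hcomp a ha t ht)
  refine monotoneOn_of_hasDerivWithinAt_nonneg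
    (f' := fun t => w' (b * t) * b - w' (a * t) * a) (convex_Ici 0)
    (fun t ht => (hderiv t ht).continuousAt.continuousWithinAt) (fun t ht => ?_) (fun t ht => ?_)
  all_goals rw [interior_Ici] at ht
  · exact (hderiv t ht.le).hasDerivWithinAt
  · have hmono_t := hmono (mem_Ici.2 (mul_nonneg ha ht.le))
      (mem_Ici.2 (mul_nonneg (ha.trans hab) ht.le)) (mul_le_mul_of_nonneg_right hab ht.le)
    simp only at hmono_t
    exact nonneg_of_mul_nonneg_right (a := t) (by linarith) ht

section Integral

variable {α : Type*} [MeasurableSpace α] {μ : Measure α}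

theorem integral_pos_of_forall_pos [NeZero μ] {f : α → ℝ} (hf : ∀ y, 0 < f y)
    (hf_int : Integrable f μ) : 0 < ∫ y, f y ∂μ := by
  rw [integral_pos_iff_support_of_nonneg (fun y => (hf y).le) hf_int,
    Function.support_eq_univ fun y => (hf y).ne']
  exact Measure.measure_univ_pos.2 (NeZero.ne μ)

theorem Antivary.integral_mul_mul_integral_le [SigmaFinite μ] {φ ψ k : α → ℝ}
    (h : Antivary φ ψ) (hk : 0 ≤ k) (hk_int : Integrable k μ)
    (hφk : Integrable (fun y => φ y * k y) μ) (hψk : Integrable (fun y => ψ y * k y) μ)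
    (hφψk : Integrable (fun y => φ y * ψ y * k y) μ) :
    (∫ y, φ y * ψ y * k y ∂μ) * (∫ y, k y ∂μ)
      ≤ (∫ y, φ y * k y ∂μ) * ∫ y, ψ y * k y ∂μ := by
  have hpair : ∫ p : α × α, (φ p.2 - φ p.1) * (ψ p.2 - ψ p.1) * (k p.1 * k p.2) ∂μ.prod μ
      = 2 * ((∫ y, φ y * ψ y * k y ∂μ) * (∫ y, k y ∂μ)
        - (∫ y, φ y * k y ∂μ) * ∫ y, ψ y * k y ∂μ) := by
    have hexpand : (fun p : α × α => (φ p.2 - φ p.1) * (ψ p.2 - ψ p.1) * (k p.1 * k p.2))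
        = fun p => (φ p.1 * ψ p.1 * k p.1) * k p.2 + k p.1 * (φ p.2 * ψ p.2 * k p.2)
          - ((φ p.1 * k p.1) * (ψ p.2 * k p.2) + (ψ p.1 * k p.1) * (φ p.2 * k p.2)) := by
      funext p; ring
    rw [hexpand, integral_sub, integral_add, integral_add,
      integral_prod_mul (f := fun y => φ y * ψ y * k y) (g := k),
      integral_prod_mul (f := k) (g := fun y => φ y * ψ y * k y),
      integral_prod_mul (f := fun y => φ y * k y) (g := fun y => ψ y * k y),
      integral_prod_mul (f := fun y => ψ y * k y) (g := fun y => φ y * k y)]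
    · ring
    exacts [hφk.mul_prod hψk, hψk.mul_prod hφk, hφψk.mul_prod hk_int, hk_int.mul_prod hφψk,
      (hφψk.mul_prod hk_int).add (hk_int.mul_prod hφψk),
      (hφk.mul_prod hψk).add (hψk.mul_prod hφk)]
  have hnonpos := integral_nonpos (μ := μ.prod μ) fun p : α × α =>
    mul_nonpos_of_nonpos_of_nonneg (h.sub_mul_sub_nonpos p.1 p.2) (mul_nonneg (hk p.1) (hk p.2))
  linarith

theorem integral_mul_div_lt_log_integral_exp_mul_div {g k : α → ℝ} (hk : ∀ y, 0 < k y)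
    (hk_int : Integrable k μ) (hgk : Integrable (fun y => g y * k y) μ)
    (hegk : Integrable (fun y => exp (g y) * k y) μ) (hg : ∀ c, ¬ g =ᵐ[μ] fun _ => c) :
    (∫ y, g y * k y ∂μ) / (∫ y, k y ∂μ)
      < log ((∫ y, exp (g y) * k y ∂μ) / ∫ y, k y ∂μ) := by
  have : NeZero μ := ⟨fun h => hg 0 (by simp [h, EventuallyEq])⟩
  have hZ := integral_pos_of_forall_pos hk hk_int
  have hZe := integral_pos_of_forall_pos (fun y => mul_pos (exp_pos (g y)) (hk y)) hegk
  set c := log ((∫ y, exp (g y) * k y ∂μ) / ∫ y, k y ∂μ)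
  have hc : exp (-c) * (∫ y, exp (g y) * k y ∂μ) = ∫ y, k y ∂μ := by
    rw [exp_neg, exp_log (div_pos hZe hZ)]
    field_simp
  -- `exp s - 1 - s ≥ 0`, with equality only at `s = 0`
  set W : α → ℝ := fun y => (exp (g y - c) - 1 - (g y - c)) * k y
  have hW : W = fun y => exp (-c) * (exp (g y) * k y) - g y * k y + (c - 1) * k y := by
    funext y; simp only [W, sub_eq_add_neg (g y) c, exp_add]; ring
  have hW_int : Integrable W μ := by
    rw [hW]; exact ((hegk.const_mul _).sub hgk).add (hk_int.const_mul _)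
  have hW_pos : 0 < ∫ y, W y ∂μ := by
    rw [integral_pos_iff_support_of_nonneg (fun y => mul_nonneg
      (by linarith [add_one_le_exp (g y - c)]) (hk y).le) hW_int]
    calc (0 : ℝ≥0∞) < μ {y | g y ≠ c} :=
          pos_iff_ne_zero.2 fun h => hg c (measure_eq_zero_iff_ae_notMem.1 h |>.mono
            fun y hy => not_not.1 hy)
      _ ≤ μ (Function.support W) := measure_mono fun y (hy : g y ≠ c) =>
          (mul_pos (by linarith [add_one_lt_exp (sub_ne_zero.2 hy)]) (hk y)).ne'
  have hW_integral : ∫ y, W y ∂μ = exp (-c) * (∫ y, exp (g y) * k y ∂μ)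
      - (∫ y, g y * k y ∂μ) + (c - 1) * ∫ y, k y ∂μ := by
    simp only [hW]
    rw [integral_add, integral_sub, integral_const_mul, integral_const_mul]
    exacts [hegk.const_mul _, hgk, (hegk.const_mul _).sub hgk, hk_int.const_mul _]
  rw [hW_integral, hc] at hW_pos
  rw [div_lt_iff₀ hZ]
  linarith

-- The entropy `-∫ p log p dμ` of the Gibbs density `p = exp (-E) / ∫ exp (-E) dμ`.
noncomputable def gibbsEntropy (μ : Measure α) (E : α → ℝ) : ℝ :=
  (∫ y, E y * exp (-E y) ∂μ) / (∫ y, exp (-E y) ∂μ) + log (∫ y, exp (-E y) ∂μ)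

section FiniteMeasure

variable [IsFiniteMeasure μ]

theorem integrable_exp_neg {E : α → ℝ} (hE : Measurable E) (hE₀ : 0 ≤ E) :
    Integrable (fun y => exp (-E y)) μ :=
  .of_bound hE.neg.exp.aestronglyMeasurable 1 <| ae_of_all _ fun y => by
    rw [norm_of_nonneg (exp_pos _).le, exp_le_one_iff, neg_nonpos]
    exact hE₀ y

theorem integrable_mul_exp_neg {φ E : α → ℝ} (hφ : Measurable φ) (hE : Measurable E)
    (hφ₀ : 0 ≤ φ) (hφE : φ ≤ E) : Integrable (fun y => φ y * exp (-E y)) μ :=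
  .of_bound (hφ.mul hE.neg.exp).aestronglyMeasurable 1 <| ae_of_all _ fun y => by
    rw [norm_of_nonneg (mul_nonneg (hφ₀ y) (exp_pos _).le)]
    calc φ y * exp (-E y) ≤ exp (E y) * exp (-E y) :=
          mul_le_mul_of_nonneg_right ((hφE y).trans (by linarith [add_one_le_exp (E y)]))
            (exp_pos _).le
      _ = 1 := by rw [← exp_add, add_neg_cancel, exp_zero]

theorem gibbsEntropy_lt_of_monovary {E₁ E₂ : α → ℝ} (hE₁ : Measurable E₁) (hE₂ : Measurable E₂)
    (hE₁₀ : 0 ≤ E₁) (hE₁₂ : E₁ ≤ E₂) (hmv : Monovary E₁ (E₂ - E₁))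
    (hnc : ∀ c, ¬ E₂ - E₁ =ᵐ[μ] fun _ => c) : gibbsEntropy μ E₂ < gibbsEntropy μ E₁ := by
  have : NeZero μ := ⟨fun h => hnc 0 (by simp [h, EventuallyEq])⟩
  have hK₁ := integrable_exp_neg (μ := μ) hE₁ hE₁₀
  have hK₂ := integrable_exp_neg (μ := μ) hE₂ (hE₁₀.trans hE₁₂)
  have hG₁ := integrable_mul_exp_neg (μ := μ) hE₁ hE₁ hE₁₀ le_rfl
  have hG₂ := integrable_mul_exp_neg (μ := μ) hE₂ hE₂ (hE₁₀.trans hE₁₂) le_rfl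
  have hP := integrable_mul_exp_neg (μ := μ) hE₁ hE₂ hE₁₀ hE₁₂
  have hZ₁ := integral_pos_of_forall_pos (fun y => exp_pos (-E₁ y)) hK₁
  have hZ₂ := integral_pos_of_forall_pos (fun y => exp_pos (-E₂ y)) hK₂
  have hK₂₁ : ∀ y, exp (-(E₂ y - E₁ y)) * exp (-E₁ y) = exp (-E₂ y) := fun y => by
    rw [← exp_add]; ring_nf
  have hK₁₂ : ∀ y, exp (E₂ y - E₁ y) * exp (-E₂ y) = exp (-E₁ y) := fun y => by
    rw [← exp_add]; ring_nf
  have hchebyshev := Antivary.integral_mul_mul_integral_le (μ := μ) (φ := E₁)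
    (ψ := fun y => exp (-(E₂ y - E₁ y))) (k := fun y => exp (-E₁ y))
    (fun i j hij => hmv (by simp only [Pi.sub_apply]; linarith [exp_lt_exp.1 hij]))
    (fun y => (exp_pos _).le) hK₁ hG₁
    (by simpa only [hK₂₁] using hK₂) (by simpa only [mul_assoc, hK₂₁] using hP)
  simp only [mul_assoc, hK₂₁] at hchebyshev
  have hgibbs := integral_mul_div_lt_log_integral_exp_mul_div (μ := μ) (g := E₂ - E₁)
    (k := fun y => exp (-E₂ y)) (fun y => exp_pos _) hK₂
    (by simp only [Pi.sub_apply, sub_mul]; exact hG₂.sub hP)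
    (by simpa only [Pi.sub_apply, hK₁₂] using hK₁) hnc
  simp only [Pi.sub_apply, sub_mul, hK₁₂] at hgibbs
  rw [integral_sub hG₂ hP, sub_div, log_div hZ₁.ne' hZ₂.ne'] at hgibbs
  have := (div_le_div_iff₀ hZ₂ hZ₁).2 hchebyshev
  unfold gibbsEntropy
  linarith

end FiniteMeasure

end Integral

theorem strictAntiOn_gibbsEntropy_comp_mul {α : Type*} [TopologicalSpace α] [MeasurableSpace α]
    [OpensMeasurableSpace α] {μ : Measure α} [IsFiniteMeasure μ] [μ.IsOpenPosMeasure]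
    {w w' : ℝ → ℝ} {u : α → ℝ}
    (hder : ∀ t ≥ 0, HasDerivAt w (w' t) t) (hw' : ∀ t ≥ 0, 0 < w' t) (hw₀ : 0 ≤ w 0)
    (hmono : MonotoneOn (fun t => t * w' t) (Ici 0)) (hu : Continuous u) (hu₀ : ∀ y, 0 ≤ u y)
    {y₀ y₁ : α} (hy₀ : u y₀ = 0) (hy₁ : 0 < u y₁) :
    StrictAntiOn (fun σ => gibbsEntropy μ fun y => w (σ * u y)) (Ici 0) := by
  intro σ₁ hσ₁ σ₂ hσ₂ hlt
  have hw_cont : ContinuousOn w (Ici 0) := fun t ht =>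
    (hder t ht).continuousAt.continuousWithinAt
  have hw_mono : StrictMonoOn w (Ici 0) :=
    strictMonoOn_of_hasDerivWithinAt_pos (convex_Ici 0) hw_cont
      (fun t ht => (hder t (interior_subset ht)).hasDerivWithinAt)
      (fun t ht => hw' t (interior_subset ht))
  have hgap := monotoneOn_comp_mul_sub_comp_mul hder hmono hσ₁ hlt.le
  have hmem : ∀ σ ∈ Ici (0 : ℝ), ∀ y, σ * u y ∈ Ici 0 := fun σ hσ y => mul_nonneg hσ (hu₀ y)
  have hcont : ∀ σ ∈ Ici (0 : ℝ), Continuous fun y => w (σ * u y) := fun σ hσ =>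
    hw_cont.comp_continuous (continuous_const.mul hu) (hmem σ hσ)
  refine gibbsEntropy_lt_of_monovary (hcont σ₁ hσ₁).measurable (hcont σ₂ hσ₂).measurable
    (fun y => hw₀.trans (hw_mono.monotoneOn self_mem_Ici (hmem σ₁ hσ₁ y) (hmem σ₁ hσ₁ y)))
    (fun y => hw_mono.monotoneOn (hmem σ₁ hσ₁ y) (hmem σ₂ hσ₂ y)
      (mul_le_mul_of_nonneg_right hlt.le (hu₀ y)))
    (fun i j hij => hw_mono.monotoneOn (hmem σ₁ hσ₁ i) (hmem σ₁ hσ₁ j)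
      (mul_le_mul_of_nonneg_left (hgap.reflect_lt (hu₀ i) (hu₀ j) hij).le hσ₁)) fun c hc => ?_
  have hconst := congrFun (((hcont σ₂ hσ₂).sub (hcont σ₁ hσ₁)).ae_eq_iff_eq μ
    continuous_const |>.1 hc)
  have hgap₀ := hconst y₀
  have hgap₁ := hconst y₁
  simp only [Pi.sub_apply, hy₀, mul_zero, sub_self] at hgap₀ hgap₁
  have := hw_mono (hmem σ₁ hσ₁ y₁) (hmem σ₂ hσ₂ y₁) (mul_lt_mul_of_pos_right hlt hy₁)
  linarith

theorem entropyF_eq_log_sub_gibbsEntropy {d : ℕ} (w : ℝ → ℝ) (θ ρ : ℝ)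
    (μ : Measure (EuclideanSpace ℝ (Fin d))) (x : EuclideanSpace ℝ (Fin d)) (σ : ℝ) :
    entropyF w θ ρ μ x σ = log ρ - gibbsEntropy μ fun y => w (σ * ‖x - y‖ ^ θ) := by
  unfold entropyF gibbsEntropy
  rw [integral_div]
  ring

theorem entropyF_strictMono_general
    (d : ℕ) (hd : 2 ≤ d) (θ : ℝ) (hθ : 0 < θ) (ρ : ℝ)
    (f : EuclideanSpace ℝ (Fin d) → ℝ) (hfc : Continuous f)
    (hfpos : ∀ x, 0 < f x)
    (μ : Measure (EuclideanSpace ℝ (Fin d)))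
    (hμ : μ = volume.withDensity (fun x => ENNReal.ofReal (f x)))
    (hprob : IsProbabilityMeasure μ)
    (w w' w'' : ℝ → ℝ)
    (hwnn : ∀ t ≥ (0:ℝ), 0 ≤ w t)
    (hder : ∀ t ≥ (0:ℝ), HasDerivAt w (w' t) t)
    (hder' : ∀ t ≥ (0:ℝ), HasDerivAt w' (w'' t) t)
    (hw'pos : ∀ t ≥ (0:ℝ), 0 < w' t)
    (hconv : ∀ t ≥ (0:ℝ), 0 ≤ w' t + t * w'' t)
    (x : EuclideanSpace ℝ (Fin d)) :
    StrictMonoOn (fun σ => entropyF w θ ρ μ x σ) (Set.Ioi (0:ℝ)) := by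
  have : μ.IsOpenPosMeasure := hμ ▸ (withDensity_absolutelyContinuous'
    hfc.measurable.ennreal_ofReal.aemeasurable
    (ae_of_all _ fun y => (ENNReal.ofReal_pos.2 (hfpos y)).ne')).isOpenPosMeasure
  obtain ⟨v, hv⟩ : ∃ v : EuclideanSpace ℝ (Fin d), ‖v‖ = 1 :=
    ⟨EuclideanSpace.single ⟨0, by omega⟩ 1, by simp⟩
  have hanti := strictAntiOn_gibbsEntropy_comp_mul (μ := μ) (u := fun y => ‖x - y‖ ^ θ)
    hder hw'pos (hwnn 0 le_rfl) (monotoneOn_id_mul_of_hasDerivAt hder' hconv)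
    (by fun_prop (disch := positivity)) (fun y => by positivity) (y₀ := x) (y₁ := x - v)
    (by simp [hθ.ne']) (by simp [hv])
  intro σ₁ hσ₁ σ₂ hσ₂ hlt
  simp only [entropyF_eq_log_sub_gibbsEntropy]
  linarith [hanti (mem_Ici.2 (le_of_lt hσ₁)) (mem_Ici.2 (le_of_lt hσ₂)) hlt]

/-- Under the input kernel conditions, `σ ↦ F_{ρ,μ}(x,σ)` is strictly increasing. -/
theorem entropyF_strictMono
    (d : ℕ) (hd : 2 ≤ d) (θ : ℝ) (hθ : 0 < θ) (ρ : ℝ) (hρ : ρ ∈ Set.Ioo (0:ℝ) 1)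
    (f : EuclideanSpace ℝ (Fin d) → ℝ) (hfc : Continuous f)
    (hfb : ∃ M, ∀ x, f x ≤ M) (hfpos : ∀ x, 0 < f x)
    (μ : Measure (EuclideanSpace ℝ (Fin d)))
    (hμ : μ = volume.withDensity (fun x => ENNReal.ofReal (f x)))
    (hprob : IsProbabilityMeasure μ)
    (w w' w'' : ℝ → ℝ)
    (hwnn : ∀ t ≥ (0:ℝ), 0 ≤ w t) (hw0 : w 0 = 0)
    (hder : ∀ t ≥ (0:ℝ), HasDerivAt w (w' t) t)
    (hder' : ∀ t ≥ (0:ℝ), HasDerivAt w' (w'' t) t)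
    (hw'pos : ∀ t ≥ (0:ℝ), 0 < w' t)
    (hwlim : Tendsto w atTop atTop)
    (hconv : ∀ t ≥ (0:ℝ), 0 ≤ w' t + t * w'' t)
    (hint : IntegrableOn
      (fun t => t ^ (d - 1) * w (t ^ θ) * Real.exp (-(w (t ^ θ)))) (Set.Ioi 0))
    (x : EuclideanSpace ℝ (Fin d)) :
    StrictMonoOn (fun σ => entropyF w θ ρ μ x σ) (Set.Ioi (0:ℝ)) :=
  entropyF_strictMono_general d hd θ hθ ρ f hfc hfpos μ hμ hprob w w' w'' hwnn hder hder' hw'pos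
    hconv x
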